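/- arXiv:0906.1207 — 2 statements merged into one kernel-verified Lean document; each statement's English description precedes it below -/
import Mathlib

section
/- Let G be a locally compact Hausdorff abelian topological group and H a discrete subgroup of G such that the quotient G/H is compact. If K is a nonempty closed subset of G that is closed under addition (a closed subsemigroup of G) and contains H, then K is a subgroup of G; in particular, −k ∈ K for every k ∈ K. -/
/-!
In a compact group, `-g` lies in the closure of the multiples `n • g` (`n : ℕ`), so a closed
submonoid of a compact group is a subgroup. Since `K + H ⊆ K`, the set `K` is a union of cosets
of `H`; its image in the compact group `G ⧸ H` is therefore a closed submonoid, hence closed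
under negation, and `K` is the full preimage of that image.
-/

open Set Pointwise QuotientAddGroup

theorem AddSubmonoid.neg_mem_of_isClosed {Q : Type*} [AddGroup Q] [TopologicalSpace Q]
    [IsTopologicalAddGroup Q] [CompactSpace Q] (S : AddSubmonoid Q) (hS : IsClosed (S : Set Q))
    {g : Q} (hg : g ∈ S) : -g ∈ S := by
  have hmultiples : range (· • g : ℕ → Q) ⊆ S := range_subset_iff.2 fun n ↦ S.nsmul_mem hg n
  have hneg : -g ∈ _root_.closure (range (· • g : ℤ → Q)) :=
    _root_.subset_closure (mem_range.2 ⟨-1, neg_one_zsmul g⟩)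
  rw [closure_range_zsmul_eq_nsmul g] at hneg
  exact closure_minimal hmultiples hS hneg

theorem QuotientAddGroup.preimage_image_mk_eq_self {α : Type*} [AddGroup α] (N : AddSubgroup α)
    {s : Set α} (hs : ∀ x ∈ s, ∀ n ∈ N, x + n ∈ s) : mk ⁻¹' ((mk : α → α ⧸ N) '' s) = s := by
  rw [preimage_image_mk_eq_add]
  exact (add_subset_iff.2 hs).antisymm (subset_add_left s N.zero_mem)

theorem closed_subsemigroup_containing_lattice_is_subgroup_general
    {G : Type*} [AddCommGroup G] [TopologicalSpace G] [IsTopologicalAddGroup G]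
    (H : AddSubgroup G)
    (hHcompact : CompactSpace (G ⧸ H))
    (K : Set G) (hKclosed : IsClosed K)
    (hKadd : ∀ x ∈ K, ∀ y ∈ K, x + y ∈ K)
    (hHK : (H : Set G) ⊆ K) :
    (∃ K' : AddSubgroup G, (K' : Set G) = K) ∧ ∀ k ∈ K, -k ∈ K := by
  let S : AddSubmonoid G :=
    { carrier := K, add_mem' := fun ha hb ↦ hKadd _ ha _ hb, zero_mem' := hHK H.zero_mem }
  have hsat : mk ⁻¹' ((mk : G → G ⧸ H) '' K) = K :=
    preimage_image_mk_eq_self H fun x hx _ hn ↦ hKadd x hx _ (hHK hn)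
  have hclosed : IsClosed (S.map (mk' H) : Set (G ⧸ H)) := by
    rw [AddSubmonoid.coe_map, ← (isQuotientMap_mk H).isClosed_preimage]
    exact hsat.symm ▸ hKclosed
  have hneg : ∀ k ∈ K, -k ∈ K := fun k hk ↦ by
    rw [← hsat]
    exact (S.map (mk' H)).neg_mem_of_isClosed hclosed (S.mem_map_of_mem (mk' H) hk)
  exact ⟨⟨{ S with neg_mem' := fun {k} ↦ hneg k }, rfl⟩, hneg⟩

/-- Let `G` be a locally compact Hausdorff abelian topological group and `H` a
discrete subgroup of `G` such that the quotient `G/H` is compact. If `K` is a nonempty closed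
subset of `G` that is closed under addition and contains `H`, then `K` is a subgroup of `G`;
in particular `-k ∈ K` for every `k ∈ K`. -/
theorem closed_subsemigroup_containing_lattice_is_subgroup
    {G : Type*} [AddCommGroup G] [TopologicalSpace G] [IsTopologicalAddGroup G]
    [LocallyCompactSpace G] [T2Space G]
    (H : AddSubgroup G) (hHdiscrete : DiscreteTopology H)
    (hHcompact : CompactSpace (G ⧸ H))
    (K : Set G) (hKne : K.Nonempty) (hKclosed : IsClosed K)
    (hKadd : ∀ x ∈ K, ∀ y ∈ K, x + y ∈ K)
    (hHK : (H : Set G) ⊆ K) :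
    (∃ K' : AddSubgroup G, (K' : Set G) = K) ∧ ∀ k ∈ K, -k ∈ K :=
  closed_subsemigroup_containing_lattice_is_subgroup_general H hHcompact K hKclosed hKadd hHK
end

section
/- Let G be a second countable locally compact Hausdorff abelian group, H a countable uniform lattice in G, and M a closed subgroup of G with H ⊆ M ⊆ G. Let F ∈ L²(Γ), where Γ is the dual group of G with Haar measure m_Γ, and let S be the closed linear span in L²(Γ) of the modulations {E_m F : m ∈ M}. If K ∈ S, then there exists a measurable function η : Γ → ℂ which is M*-periodic (η(γ + m*) = η(γ) for all γ ∈ Γ and all m* in the annihilator M*) such that K = η·F almost everywhere. -/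
/-!
Each modulation `γ ↦ γ(m) F(γ)`, `m ∈ M`, is `η F` with `η = (m, ·)` measurable and
`M*`-periodic, and such multiples form a submodule. It is closed: an `L²`-convergent sequence
`ηₖ F` has a subsequence converging a.e.; where `F ≠ 0` the multipliers then converge, and their
pointwise `limUnder` is again measurable and periodic, being built from the values `ηₖ(γ)` alone.
-/

open MeasureTheory Multiplicative Filter Topology
open scoped ENNReal

theorem eq_limUnder_mul_of_tendsto_mul {𝕜 ι : Type*} [NormedField 𝕜] {l : Filter ι} [l.NeBot]
    {u : ι → 𝕜} {a b : 𝕜} (h : Tendsto (fun k => u k * a) l (𝓝 b)) :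
    b = limUnder l u * a := by
  by_cases ha : a = 0
  · subst ha
    simp only [mul_zero] at h ⊢
    exact tendsto_nhds_unique h tendsto_const_nhds
  · have hu : Tendsto u l (𝓝 (b / a)) := by
      simpa [mul_div_assoc, div_self ha] using h.div_const a
    rw [hu.limUnder_eq, div_mul_cancel₀ b ha]

section InvariantMultiples

variable {α : Type*} [MeasurableSpace α] {μ : Measure α} {p : ℝ≥0∞}

def invariantMultiples (F : Lp ℂ p μ) (T : Set (α → α)) : Submodule ℂ (Lp ℂ p μ) where
  carrier := {K | ∃ η : α → ℂ, Measurable η ∧ (∀ τ ∈ T, η ∘ τ = η) ∧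
    (K : α → ℂ) =ᵐ[μ] fun x => η x * F x}
  zero_mem' := by
    refine ⟨0, measurable_const, fun _ _ => rfl, ?_⟩
    filter_upwards [Lp.coeFn_zero ℂ p μ] with x hx
    simp only [hx, Pi.zero_apply, zero_mul]
  add_mem' := by
    rintro K₁ K₂ ⟨η₁, hm₁, hinv₁, he₁⟩ ⟨η₂, hm₂, hinv₂, he₂⟩
    refine ⟨η₁ + η₂, hm₁.add hm₂, fun τ hτ => ?_, ?_⟩
    · rw [Pi.add_comp, hinv₁ τ hτ, hinv₂ τ hτ]
    · filter_upwards [Lp.coeFn_add K₁ K₂, he₁, he₂] with x h h₁ h₂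
      simp only [h, Pi.add_apply, h₁, h₂, add_mul]
  smul_mem' := by
    rintro c K ⟨η, hm, hinv, he⟩
    refine ⟨c • η, hm.const_smul c, fun τ hτ => ?_, ?_⟩
    · rw [Pi.smul_comp, hinv τ hτ]
    · filter_upwards [Lp.coeFn_smul c K, he] with x h h'
      simp only [h, Pi.smul_apply, h', smul_eq_mul, mul_assoc]

theorem isClosed_invariantMultiples [Fact (1 ≤ p)] (F : Lp ℂ p μ) (T : Set (α → α)) :
    IsClosed (invariantMultiples F T : Set (Lp ℂ p μ)) := by
  refine IsSeqClosed.isClosed fun f L hf hlim => ?_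
  obtain ⟨ns, -, hae⟩ := (tendstoInMeasure_of_tendsto_Lp hlim).exists_seq_tendsto_ae
  choose η hm hinv he using hf
  refine ⟨fun x => limUnder atTop (fun k => η (ns k) x),
    (StronglyMeasurable.limUnder fun k => (hm (ns k)).stronglyMeasurable).measurable,
    fun τ hτ => funext fun x => ?_, ?_⟩
  · simp only [Function.comp_apply, ← congrFun (hinv _ τ hτ) x]
  · filter_upwards [hae, ae_all_iff.2 fun k => he (ns k)] with x hx he'
    simp only [he'] at hx
    exact eq_limUnder_mul_of_tendsto_mul hx

end InvariantMultiples

section Modulations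

variable {G : Type*} [AddCommGroup G] [TopologicalSpace G]
  [MeasurableSpace (PontryaginDual (Multiplicative G))]
  [OpensMeasurableSpace (PontryaginDual (Multiplicative G))]

def annihilatorTranslations (M : Set G) : Set (PontryaginDual (Multiplicative G) →
    PontryaginDual (Multiplicative G)) :=
  (fun χ γ => γ * χ) '' {χ | ∀ m ∈ M, χ (ofAdd m) = 1}

theorem modulation_mem_invariantMultiples {p : ℝ≥0∞}
    (μ : Measure (PontryaginDual (Multiplicative G))) (F : Lp ℂ p μ) (M : Set G) {m : G}
    (hm : m ∈ M) {K : Lp ℂ p μ}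
    (hK : (K : PontryaginDual (Multiplicative G) → ℂ) =ᵐ[μ] fun γ => (γ (ofAdd m) : ℂ) * F γ) :
    K ∈ invariantMultiples F (annihilatorTranslations M) := by
  refine ⟨fun γ => (γ (ofAdd m) : ℂ), ?_, ?_, hK⟩
  · have hcont : Continuous fun γ : PontryaginDual (Multiplicative G) => γ (ofAdd m) :=
      continuous_eval_const (F := Multiplicative G →ₜ* Circle) (ofAdd m)
    exact (continuous_subtype_val.comp hcont).measurable
  · rintro _ ⟨χ, hχ, rfl⟩
    funext γ
    have hmul : (γ * χ) (ofAdd m) = γ (ofAdd m) * χ (ofAdd m) := rfl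
    simp only [Function.comp_apply, hmul, hχ m hm, mul_one]

end Modulations

theorem principal_M_invariant_space_direct_general
    {G : Type*} [AddCommGroup G] [TopologicalSpace G]
    [MeasurableSpace (PontryaginDual (Multiplicative G))]
    [BorelSpace (PontryaginDual (Multiplicative G))]
    (mΓ : Measure (PontryaginDual (Multiplicative G)))
    (M : AddSubgroup G)
    (F : Lp ℂ 2 mΓ)
    (S : Submodule ℂ (Lp ℂ 2 mΓ))
    (hS : S = (Submodule.span ℂ {K : Lp ℂ 2 mΓ | ∃ m ∈ M,
        (K : PontryaginDual (Multiplicative G) → ℂ) =ᵐ[mΓ]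
          fun γ => (γ (ofAdd m) : ℂ) * (F : PontryaginDual (Multiplicative G) → ℂ) γ
      }).topologicalClosure)
    (K : Lp ℂ 2 mΓ) (hK : K ∈ S) :
    ∃ η : PontryaginDual (Multiplicative G) → ℂ, Measurable η ∧
      (∀ γ mstar : PontryaginDual (Multiplicative G),
        (∀ m ∈ M, mstar (ofAdd m) = 1) → η (γ * mstar) = η γ) ∧
      (K : PontryaginDual (Multiplicative G) → ℂ) =ᵐ[mΓ]
        fun γ => η γ * (F : PontryaginDual (Multiplicative G) → ℂ) γ := by
  subst hS
  have hspan : Submodule.span ℂ {K : Lp ℂ 2 mΓ | ∃ m ∈ M, _} ≤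
      invariantMultiples F (annihilatorTranslations (M : Set G)) :=
    Submodule.span_le.2 fun K ⟨m, hm, hK⟩ => modulation_mem_invariantMultiples mΓ F M hm hK
  obtain ⟨η, hη, hinv, hKη⟩ :=
    Submodule.topologicalClosure_minimal _ hspan (isClosed_invariantMultiples _ _) hK
  exact ⟨η, hη, fun γ χ hχ => congrFun (hinv _ ⟨χ, hχ, rfl⟩) γ, hKη⟩

/-- Fourier-side characterization of principal `M`-invariant spaces (direct part).
`Γ` is the Pontryagin dual of `G`, `S` the closed linear span of the modulations
`{E_m F : m ∈ M}` in `L²(Γ)`.  Every `K ∈ S` is of the form `K = η · F` a.e. for some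
measurable `M*`-periodic function `η`. -/
theorem principal_M_invariant_space_direct
    {G : Type*} [AddCommGroup G] [TopologicalSpace G] [IsTopologicalAddGroup G]
    [LocallyCompactSpace G] [T2Space G] [SecondCountableTopology G]
    [MeasurableSpace (PontryaginDual (Multiplicative G))]
    [BorelSpace (PontryaginDual (Multiplicative G))]
    (mΓ : Measure (PontryaginDual (Multiplicative G))) [mΓ.IsHaarMeasure]
    (H : AddSubgroup G) (hHcount : Countable H) (hHdiscrete : DiscreteTopology H)
    (hHcompact : CompactSpace (G ⧸ H))
    (M : AddSubgroup G) (hHM : H ≤ M) (hMclosed : IsClosed (M : Set G))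
    (F : Lp ℂ 2 mΓ)
    (S : Submodule ℂ (Lp ℂ 2 mΓ))
    (hS : S = (Submodule.span ℂ {K : Lp ℂ 2 mΓ | ∃ m ∈ M,
        (K : PontryaginDual (Multiplicative G) → ℂ) =ᵐ[mΓ]
          fun γ => (γ (ofAdd m) : ℂ) * (F : PontryaginDual (Multiplicative G) → ℂ) γ
      }).topologicalClosure)
    (K : Lp ℂ 2 mΓ) (hK : K ∈ S) :
    ∃ η : PontryaginDual (Multiplicative G) → ℂ, Measurable η ∧
      (∀ γ mstar : PontryaginDual (Multiplicative G),
        (∀ m ∈ M, mstar (ofAdd m) = 1) → η (γ * mstar) = η γ) ∧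
      (K : PontryaginDual (Multiplicative G) → ℂ) =ᵐ[mΓ]
        fun γ => η γ * (F : PontryaginDual (Multiplicative G) → ℂ) γ :=
  principal_M_invariant_space_direct_general mΓ M F S hS K hK
end
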